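/- arXiv:2511.02577 — 4 statements merged into one kernel-verified Lean document; each statement's English description precedes it below -/
import Mathlib

section
/- For A > 0, 0 < ε < 1, 0 < β < 1, and α > 1, the DClamp surrogate min(w·A, clip(w, 1-ε, 1+ε)·A, (α·w - (α-1)(1-β))·A) is less than or equal to the PPO surrogate min(w·A, clip(w, 1-ε, 1+ε)·A) for all w ∈ ℝ, with equality whenever w ≥ 1-β. -/
noncomputable def clip (w a b : ℝ) : ℝ := max a (min w b)

theorem stmt_3 (A ε β α : ℝ) (hA : A > 0) (hε0 : 0 < ε) (hε1 : ε < 1)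
    (hβ0 : 0 < β) (hβ1 : β < 1) (hα : α > 1) :
    (∀ w : ℝ,
      min (min (w * A) (clip w (1 - ε) (1 + ε) * A)) ((α * w - (α - 1) * (1 - β)) * A)
        ≤ min (w * A) (clip w (1 - ε) (1 + ε) * A)) ∧
    (∀ w : ℝ, w ≥ 1 - β →
      min (min (w * A) (clip w (1 - ε) (1 + ε) * A)) ((α * w - (α - 1) * (1 - β)) * A)
        = min (w * A) (clip w (1 - ε) (1 + ε) * A)) := by
  constructor
  · intro w; exact min_le_left _ _
  · intro w hw
    apply min_eq_left
    have hfw : w ≤ α * w - (α - 1) * (1 - β) := by nlinarith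
    calc min (w * A) (clip w (1 - ε) (1 + ε) * A) ≤ w * A := min_le_left _ _
      _ ≤ (α * w - (α - 1) * (1 - β)) * A := by nlinarith
end

section
/- For A < 0, 0 < ε < 1, 0 < β < 1, and α > 1, the DClamp surrogate min(w·A, clip(w, 1-ε, 1+ε)·A, (α·w - (α-1)(1+β))·A) equals the PPO surrogate min(w·A, clip(w, 1-ε, 1+ε)·A) for all w ≤ 1+β, and is strictly smaller for all w > 1+β. -/
theorem stmt_4 (A ε β α : ℝ) (hA : A < 0) (hε0 : 0 < ε) (hε1 : ε < 1)
    (hβ0 : 0 < β) (hβ1 : β < 1) (hα : α > 1) :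
    (∀ w : ℝ, w ≤ 1 + β →
      min (min (w * A) (clip w (1 - ε) (1 + ε) * A)) ((α * w - (α - 1) * (1 + β)) * A)
        = min (w * A) (clip w (1 - ε) (1 + ε) * A)) ∧
    (∀ w : ℝ, w > 1 + β →
      min (min (w * A) (clip w (1 - ε) (1 + ε) * A)) ((α * w - (α - 1) * (1 + β)) * A)
        < min (w * A) (clip w (1 - ε) (1 + ε) * A)) := by
  constructor
  · intro w hw
    have h1 : w * A ≤ (α * w - (α - 1) * (1 + β)) * A := by
      nlinarith [mul_nonneg (mul_nonneg (by linarith : (0:ℝ) ≤ α - 1)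
        (by linarith : (0:ℝ) ≤ 1 + β - w)) (by linarith : (0:ℝ) ≤ -A)]
    exact min_eq_left (le_trans (min_le_left _ _) h1)
  · intro w hw
    have hclip : clip w (1 - ε) (1 + ε) ≤ w := by
      unfold clip
      exact max_le (by linarith) (min_le_left _ _)
    have hf : w < α * w - (α - 1) * (1 + β) := by nlinarith
    have h1 : (α * w - (α - 1) * (1 + β)) * A < w * A := by nlinarith [mul_pos (by nlinarith : (0:ℝ) < α * w - (α - 1) * (1 + β) - w) (by linarith : (0:ℝ) < -A)]
    have h2 : (α * w - (α - 1) * (1 + β)) * A < clip w (1 - ε) (1 + ε) * A := by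
      nlinarith [mul_pos (by nlinarith [hclip] : (0:ℝ) < α * w - (α - 1) * (1 + β) - clip w (1 - ε) (1 + ε)) (by linarith : (0:ℝ) < -A)]
    calc min (min (w * A) (clip w (1 - ε) (1 + ε) * A)) ((α * w - (α - 1) * (1 + β)) * A)
        ≤ (α * w - (α - 1) * (1 + β)) * A := min_le_right _ _
      _ < min (w * A) (clip w (1 - ε) (1 + ε) * A) := lt_min h1 h2
end

section
/- For A > 0, 0 < ε < 1, 0 < β ≤ ε, and α > 1, the DClamp surrogate J_DClamp(w) = min(w·A, clip(w, 1-ε, 1+ε)·A, (α·w - (α-1)(1-β))·A) satisfies: J_DClamp(w) = (α·w - (α-1)(1-β))·A for w ≤ 1-β, J_DClamp(w) = w·A for 1-β ≤ w ≤ 1+ε, and J_DClamp(w) = (1+ε)·A for w ≥ 1+ε. -/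
noncomputable def JDClamp (A ε β α w : ℝ) : ℝ :=
  min (min (w * A) (clip w (1 - ε) (1 + ε) * A)) ((α * w - (α - 1) * (1 - β)) * A)

theorem stmt_5 (A ε β α : ℝ) (hA : A > 0) (hε0 : 0 < ε) (hε1 : ε < 1)
    (hβ0 : 0 < β) (hβε : β ≤ ε) (hα : α > 1) :
    (∀ w : ℝ, w ≤ 1 - β → JDClamp A ε β α w = (α * w - (α - 1) * (1 - β)) * A) ∧
    (∀ w : ℝ, 1 - β ≤ w → w ≤ 1 + ε → JDClamp A ε β α w = w * A) ∧
    (∀ w : ℝ, w ≥ 1 + ε → JDClamp A ε β α w = (1 + ε) * A) := by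
  refine ⟨?_, ?_, ?_⟩
  · intro w hw
    have hclip : clip w (1 - ε) (1 + ε) = max (1 - ε) w := by
      unfold clip; rw [min_eq_left (by linarith)]
    have hpw : α * w - (α - 1) * (1 - β) ≤ w := by nlinarith
    have hpc : α * w - (α - 1) * (1 - β) ≤ max (1 - ε) w := by
      rcases le_total w (1 - ε) with h | h
      · rw [max_eq_left h]; nlinarith
      · rw [max_eq_right h]; exact hpw
    unfold JDClamp
    rw [hclip, min_eq_right (le_min (mul_le_mul_of_nonneg_right hpw hA.le)
      (mul_le_mul_of_nonneg_right hpc hA.le))]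
  · intro w hw1 hw2
    have hclip : clip w (1 - ε) (1 + ε) = w := by
      unfold clip; rw [min_eq_left hw2, max_eq_right (by linarith)]
    have hpw : w ≤ α * w - (α - 1) * (1 - β) := by nlinarith
    unfold JDClamp
    rw [hclip, min_self, min_eq_left (mul_le_mul_of_nonneg_right hpw hA.le)]
  · intro w hw
    have hclip : clip w (1 - ε) (1 + ε) = 1 + ε := by
      unfold clip; rw [min_eq_right hw, max_eq_right (by linarith)]
    have h1 : (1 + ε : ℝ) ≤ w := hw
    have hp : (1 + ε : ℝ) ≤ α * w - (α - 1) * (1 - β) := by nlinarith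
    unfold JDClamp
    rw [hclip, min_eq_right (mul_le_mul_of_nonneg_right h1 hA.le),
      min_eq_left (mul_le_mul_of_nonneg_right hp hA.le)]
end

section
/- For any A ≠ 0, ε ∈ (0,1), β ∈ (0,1), α > 1, the DClamp surrogate (with f(w) = α·w - (α-1)(1-β) if A > 0 and f(w) = α·w - (α-1)(1+β) if A < 0) is a concave function of w on ℝ. -/
lemma affine_concave (m c : ℝ) : ConcaveOn ℝ Set.univ (fun w : ℝ => m * w + c) := by
  refine ⟨convex_univ, ?_⟩
  intro x _ y _ a b ha hb hab
  simp only [smul_eq_mul]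
  apply le_of_eq
  linear_combination c * hab

lemma min_clip (w a b : ℝ) (hab : a ≤ b) : min w (clip w a b) = min w b := by
  simp only [clip, max_def, min_def]
  split_ifs <;> linarith

lemma max_clip (w a b : ℝ) (hab : a ≤ b) : max w (clip w a b) = max w a := by
  simp only [clip, max_def, min_def]
  split_ifs <;> linarith

lemma min_mul_pos (w x A : ℝ) (hA : 0 ≤ A) : min (w * A) (x * A) = min w x * A := by
  rcases le_total w x with h | h
  · rw [min_eq_left h, min_eq_left (mul_le_mul_of_nonneg_right h hA)]
  · rw [min_eq_right h, min_eq_right (mul_le_mul_of_nonneg_right h hA)]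

lemma min_mul_neg (w x A : ℝ) (hA : A ≤ 0) : min (w * A) (x * A) = max w x * A := by
  rcases le_total w x with h | h
  · rw [max_eq_right h, min_eq_right (mul_le_mul_of_nonpos_right h hA)]
  · rw [max_eq_left h, min_eq_left (mul_le_mul_of_nonpos_right h hA)]

theorem stmt_8 (A ε β α : ℝ) (hA : A ≠ 0) (hε0 : 0 < ε) (hε1 : ε < 1)
    (hβ0 : 0 < β) (hβ1 : β < 1) (hα : α > 1) :
    ConcaveOn ℝ Set.univ (fun w : ℝ =>
      min (min (w * A) (clip w (1 - ε) (1 + ε) * A))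
        ((α * w - (α - 1) * (if A > 0 then 1 - β else 1 + β)) * A)) := by
  have hεε : (1 : ℝ) - ε ≤ 1 + ε := by linarith
  rcases hA.lt_or_gt with hA' | hA'
  · have hkey : (fun w : ℝ =>
      min (min (w * A) (clip w (1 - ε) (1 + ε) * A))
        ((α * w - (α - 1) * (if A > 0 then 1 - β else 1 + β)) * A)) =
      fun w : ℝ => min (min (A * w + 0) (0 * w + (1 - ε) * A))
        ((α * A) * w + (-(α - 1) * (1 + β)) * A) := by
      funext w
      have hif : (if A > 0 then (1:ℝ) - β else 1 + β) = 1 + β := by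
        simp [hA'.not_gt]
      rw [hif]
      have h1 : min (w * A) (clip w (1 - ε) (1 + ε) * A) = min (w * A) ((1 - ε) * A) := by
        rw [min_mul_neg _ _ _ hA'.le, min_mul_neg _ _ _ hA'.le,
          max_clip _ _ _ hεε]
      rw [h1]
      congr 1
      · congr 1 <;> ring
      · ring
    rw [hkey]
    exact ((affine_concave _ _).inf (affine_concave _ _)).inf (affine_concave _ _)
  · have hkey : (fun w : ℝ =>
      min (min (w * A) (clip w (1 - ε) (1 + ε) * A))
        ((α * w - (α - 1) * (if A > 0 then 1 - β else 1 + β)) * A)) =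
      fun w : ℝ => min (min (A * w + 0) (0 * w + (1 + ε) * A))
        ((α * A) * w + (-(α - 1) * (1 - β)) * A) := by
      funext w
      have hif : (if A > 0 then (1:ℝ) - β else 1 + β) = 1 - β := by
        simp [hA']
      rw [hif]
      have h1 : min (w * A) (clip w (1 - ε) (1 + ε) * A) = min (w * A) ((1 + ε) * A) := by
        rw [min_mul_pos _ _ _ hA'.le, min_mul_pos _ _ _ hA'.le,
          min_clip _ _ _ hεε]
      rw [h1]
      congr 1
      · congr 1 <;> ring
      · ring
    rw [hkey]
    exact ((affine_concave _ _).inf (affine_concave _ _)).inf (affine_concave _ _)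
end
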